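/- General sphere evaluation formula: for all natural numbers a, b, the element tr(gl(X^a ⊗ X^b)) of P equals 0 if a + b is even, equals α^{(a+b−1)/2}·ω₊ if a is odd and b is even, and equals α^{(a+b−1)/2}·ω₋ if a is even and b is odd. (This is the evaluation of a sphere with a singular seam carrying a dots on one ordinary hemisphere and b dots on the other; for a, b ∈ {0, 1} it recovers the sphere relations of the paper.) -/
import Mathlib


open Polynomial
open scoped TensorProduct

set_option maxHeartbeats 1000000

/-- General sphere evaluation formula: with `A = P[X]/(X² − α)`, trace `tr`
(`tr 1 = 0`, `tr X = τ`), maps `L` (`L 1 = 1`, `L X = ω₊ τ⁻¹ X`) and `R`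
(`R 1 = 1`, `R X = ω₋ τ⁻¹ X`), and gluing map `gl (x ⊗ y) = L x * R y`, for all
natural numbers `a, b` the value `tr (gl (X^a ⊗ X^b))` is `0` if `a + b` is even,
`α^((a+b−1)/2) * ω₊` if `a` is odd (and `b` even), and `α^((a+b−1)/2) * ω₋` if `a`
is even (and `b` odd). -/
theorem sphere_evaluation_formula
    {P : Type*} [CommRing P] (α : P) (τ ωp ωm : Pˣ)
    (tr : AdjoinRoot (X ^ 2 - C α) →ₗ[P] P)
    (htr1 : tr 1 = 0)
    (htrX : tr (AdjoinRoot.root (X ^ 2 - C α)) = (τ : P))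
    (L : AdjoinRoot (X ^ 2 - C α) →ₗ[P] AdjoinRoot (X ^ 2 - C α))
    (hL1 : L 1 = 1)
    (hLX : L (AdjoinRoot.root (X ^ 2 - C α)) =
      ((ωp : P) * ((τ⁻¹ : Pˣ) : P)) • AdjoinRoot.root (X ^ 2 - C α))
    (R : AdjoinRoot (X ^ 2 - C α) →ₗ[P] AdjoinRoot (X ^ 2 - C α))
    (hR1 : R 1 = 1)
    (hRX : R (AdjoinRoot.root (X ^ 2 - C α)) =
      ((ωm : P) * ((τ⁻¹ : Pˣ) : P)) • AdjoinRoot.root (X ^ 2 - C α))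
    (gl : AdjoinRoot (X ^ 2 - C α) ⊗[P] AdjoinRoot (X ^ 2 - C α) →ₗ[P]
      AdjoinRoot (X ^ 2 - C α))
    (hgl : ∀ x y : AdjoinRoot (X ^ 2 - C α), gl (x ⊗ₜ[P] y) = L x * R y) :
    ∀ a b : ℕ,
      tr (gl (((AdjoinRoot.root (X ^ 2 - C α)) ^ a) ⊗ₜ[P]
              ((AdjoinRoot.root (X ^ 2 - C α)) ^ b))) =
        if Even (a + b) then 0
        else if Odd a then α ^ ((a + b - 1) / 2) * (ωp : P)
        else α ^ ((a + b - 1) / 2) * (ωm : P) := by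
  set r := AdjoinRoot.root (X ^ 2 - C α) with hr
  have h2 : r ^ 2 = α • (1 : AdjoinRoot (X ^ 2 - C α)) := by
    have h := AdjoinRoot.eval₂_root (X ^ 2 - C α)
    simp only [eval₂_sub, eval₂_pow, eval₂_X, eval₂_C, sub_eq_zero] at h
    rw [hr, h, ← AdjoinRoot.algebraMap_eq, Algebra.algebraMap_eq_smul_one]
  have heven : ∀ k : ℕ, r ^ (2 * k) = (α ^ k) • (1 : AdjoinRoot (X ^ 2 - C α)) := by
    intro k
    rw [pow_mul, h2, _root_.smul_pow, one_pow]
  have hodd : ∀ k : ℕ, r ^ (2 * k + 1) = (α ^ k) • r := by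
    intro k
    have h3 : r ^ (2 * k + 1) = r ^ (2 * k) * r := pow_succ r (2 * k)
    rw [h3, heven, smul_mul_assoc, one_mul]
  have hτ : ((τ⁻¹ : Pˣ) : P) * (τ : P) = 1 := τ.inv_mul
  intro a b
  rcases Nat.even_or_odd a with ⟨k, hk⟩ | ⟨k, hk⟩ <;>
    rcases Nat.even_or_odd b with ⟨l, hl⟩ | ⟨l, hl⟩ <;> subst hk hl
  · rw [show k + k = 2 * k by ring, show l + l = 2 * l by ring,
      hgl, heven, heven, if_pos ⟨k + l, by ring⟩]
    simp only [map_smul, hL1, hR1, smul_mul_assoc, mul_smul_comm, smul_smul, one_mul,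
      htr1, smul_eq_mul, mul_zero]
  · rw [show k + k = 2 * k by ring, hgl, heven, hodd,
      if_neg (by rintro ⟨m, hm⟩; omega), if_neg (by rintro ⟨m, hm⟩; omega),
      show (2 * k + (2 * l + 1) - 1) / 2 = k + l by omega]
    simp only [map_smul, hL1, hRX, smul_mul_assoc, mul_smul_comm, smul_smul, one_mul,
      mul_one, htrX, smul_eq_mul]
    rw [pow_add]
    linear_combination (α ^ k * α ^ l * (ωm : P)) * hτ
  · rw [show l + l = 2 * l by ring, hgl, hodd, heven,
      if_neg (by rintro ⟨m, hm⟩; omega), if_pos ⟨k, by ring⟩,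
      show (2 * k + 1 + 2 * l - 1) / 2 = k + l by omega]
    simp only [map_smul, hLX, hR1, smul_mul_assoc, mul_smul_comm, smul_smul, one_mul,
      mul_one, htrX, smul_eq_mul]
    rw [pow_add]
    linear_combination (α ^ k * α ^ l * (ωp : P)) * hτ
  · rw [hgl, hodd, hodd, if_pos ⟨k + l + 1, by ring⟩]
    simp only [map_smul, hLX, hRX, smul_mul_assoc, mul_smul_comm, smul_smul, ← sq, h2,
      one_mul, htr1, smul_eq_mul, mul_zero, smul_zero]
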